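/- arXiv:2603.21645 — 7 statements merged into one kernel-verified Lean document; each statement's English description precedes it below -/
import Mathlib

section
/- For every valid Fibonacci representation x (a binary word containing no factor 11), one has −β² < [x0] − α[x] < −β, where α = (1+√5)/2 and β = (1−√5)/2. -/
/-- The Fibonacci (Zeckendorf) value of a binary word written msd-first:
`[x₁⋯x_ℓ] = Σ_j x_j · F_{ℓ−j+2}`. -/
def fibVal : List Bool → ℕ
  | [] => 0
  | a :: rest => (if a then Nat.fib (rest.length + 2) else 0) + fibVal rest

/-- A binary word is a valid Fibonacci representation if it has no factor `11`. -/
def ValidFib (w : List Bool) : Prop :=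
  w.Chain' (fun a b => a = false ∨ b = false)

/-!
By Binet's formula `F_{k+1} - α F_k = β^k`, so `[x0] - α[x]` is the sum of the `β^k` over the
weights `F_k` (`k ≥ 2`) of the letters `1` of `x`. Without a factor `11` these exponents are
pairwise at least two apart. With `b = |β|`, which satisfies `b² = 1 - b`, the positive terms
(even `k`) add up to less than `b² + b⁴ + ⋯ = b`, the negative ones (odd `k`) to more than
`-(b³ + b⁵ + ⋯) = -b²`.
-/

open Real goldenRatio

theorem ValidFib.tail {a : Bool} {x : List Bool} (h : ValidFib (a :: x)) : ValidFib x :=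
  List.IsChain.tail h

theorem not_validFib_true_true (x : List Bool) : ¬ValidFib (true :: true :: x) := fun h => by
  simpa using (List.isChain_cons_cons.mp h).1

theorem abs_goldenConj_pow_add_two (n : ℕ) : |ψ| ^ (n + 2) = |ψ| ^ n - |ψ| ^ (n + 1) := by
  have h : |ψ| ^ 2 = 1 - |ψ| := by
    rw [sq_abs, goldenConj_sq, abs_of_neg goldenConj_neg]; ring
  rw [pow_add, h]; ring

noncomputable def zeroAppendDefect (x : List Bool) : ℝ :=
  fibVal (x ++ [false]) - φ * fibVal x

theorem zeroAppendDefect_nil : zeroAppendDefect [] = 0 := by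
  simp [zeroAppendDefect, fibVal]

theorem zeroAppendDefect_cons (a : Bool) (x : List Bool) :
    zeroAppendDefect (a :: x) = (if a then ψ ^ (x.length + 2) else 0) + zeroAppendDefect x := by
  have binet := fib_succ_sub_goldenRatio_mul_fib (x.length + 2)
  cases a
  · simp [zeroAppendDefect, fibVal]
  · simp [zeroAppendDefect, fibVal] at binet ⊢
    linear_combination binet

-- The slack `|β|^(ℓ+2)` strengthens the induction: prefixing `10` adds a term of absolute value
-- `|β|^(ℓ+3) = |β|^(ℓ+2) - |β|^(ℓ+4)`, exactly the slack it loses.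
theorem zeroAppendDefect_bounds :
    ∀ x : List Bool, ValidFib x →
      -|ψ| ^ 2 + |ψ| ^ (x.length + 2) ≤ zeroAppendDefect x ∧
        zeroAppendDefect x ≤ |ψ| - |ψ| ^ (x.length + 2)
  | [], _ => by
    have h3 : |ψ| ^ 3 = |ψ| ^ 1 - |ψ| ^ 2 := abs_goldenConj_pow_add_two 1
    have := pow_nonneg (abs_nonneg ψ) 3
    simp only [List.length_nil, zeroAppendDefect_nil, zero_add, pow_one] at h3 ⊢
    constructor <;> linarith
  | false :: x, hx => by
    obtain ⟨lower, upper⟩ := zeroAppendDefect_bounds x hx.tail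
    have decay : |ψ| ^ (x.length + 4) = |ψ| ^ (x.length + 2) - |ψ| ^ (x.length + 3) :=
      abs_goldenConj_pow_add_two (x.length + 2)
    have := pow_nonneg (abs_nonneg ψ) (x.length + 4)
    simp only [zeroAppendDefect_cons, List.length_cons, Bool.false_eq_true, if_false, zero_add]
    constructor <;> linarith
  | [true], _ => by
    have h3 : |ψ| ^ 3 = |ψ| ^ 1 - |ψ| ^ 2 := abs_goldenConj_pow_add_two 1
    have h4 : |ψ| ^ 4 = |ψ| ^ 2 - |ψ| ^ 3 := abs_goldenConj_pow_add_two 2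
    have := pow_nonneg (abs_nonneg ψ) 4
    have := pow_nonneg (abs_nonneg ψ) 2
    simp only [zeroAppendDefect_cons, List.length_cons, List.length_nil, Nat.reduceAdd, if_true,
      zeroAppendDefect_nil, add_zero, pow_one, ← sq_abs ψ] at h3 ⊢
    constructor <;> linarith
  | true :: true :: x, hx => absurd hx (not_validFib_true_true x)
  | true :: false :: x, hx => by
    obtain ⟨lower, upper⟩ := zeroAppendDefect_bounds x hx.tail.tail
    have term := abs_le.mp (le_of_eq (abs_pow ψ (x.length + 3)))
    have gap : |ψ| ^ (x.length + 4) = |ψ| ^ (x.length + 2) - |ψ| ^ (x.length + 3) :=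
      abs_goldenConj_pow_add_two (x.length + 2)
    simp only [zeroAppendDefect_cons, List.length_cons, if_true, Bool.false_eq_true, if_false,
      zero_add]
    constructor <;> linarith

theorem fibVal_zero_append_bounds (x : List Bool) (hx : ValidFib x) :
    -((1 - Real.sqrt 5) / 2) ^ 2 <
      (fibVal (x ++ [false]) : ℝ) - (1 + Real.sqrt 5) / 2 * fibVal x ∧
    (fibVal (x ++ [false]) : ℝ) - (1 + Real.sqrt 5) / 2 * fibVal x <
      -((1 - Real.sqrt 5) / 2) := by
  show -ψ ^ 2 < zeroAppendDefect x ∧ zeroAppendDefect x < -ψ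
  obtain ⟨lower, upper⟩ := zeroAppendDefect_bounds x hx
  have gap_pos : 0 < |ψ| ^ (x.length + 2) := pow_pos (abs_pos.mpr goldenConj_ne_zero) _
  rw [sq_abs, abs_of_neg goldenConj_neg] at lower
  rw [abs_of_neg goldenConj_neg] at upper gap_pos
  exact ⟨by linarith, by linarith⟩
end

section
/- Suppose x is a binary word, a ∈ {0,1}, and the word xa (x with letter a appended) is a valid Fibonacci representation. Then [x] = ⌊([xa]+2)/α⌋ − 1, where α = (1+√5)/2. -/
/-!
Reading a word in base `ψ = 1 - φ` gives the error term of the golden-ratio approximation of its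
Fibonacci value: since `F_{n+1} - φ F_n = ψ^n`, we have `[xa] = φ([x] + a) + ψ v(xa)`, where
`v(w) = Σ_j w_j ψ^{ℓ-j}`. For a word without factor `11`, peeling off the last letter shows that
`v(w)` lies in `(-ψ, φ)` if `w` ends in `1` and in `(-1, -ψ)` otherwise. Either way
`[xa] + 2 ∈ [φ([x] + 1), φ([x] + 2))`, which is the floor identity.
-/

open Real goldenRatio Set

noncomputable def digitVal (r : ℝ) : List Bool → ℝ
  | [] => 0
  | a :: rest => (if a then r ^ rest.length else 0) + digitVal r rest

theorem digitVal_append_singleton (r : ℝ) (x : List Bool) (a : Bool) :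
    digitVal r (x ++ [a]) = r * digitVal r x + a.toNat := by
  induction x with
  | nil => cases a <;> simp [digitVal]
  | cons b rest ih =>
    simp only [List.cons_append, digitVal, List.length_append, List.length_singleton, ih]
    split_ifs <;> ring

theorem fibVal_append_singleton (x : List Bool) (a : Bool) :
    (fibVal (x ++ [a]) : ℝ) = φ * (fibVal x + a.toNat) + ψ * digitVal ψ (x ++ [a]) := by
  induction x with
  | nil =>
    have : φ + ψ = 1 := goldenRatio_add_goldenConj
    cases a <;> simp [fibVal, digitVal, this]
  | cons b rest ih =>
    have hfib := fib_succ_sub_goldenRatio_mul_fib (rest.length + 2)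
    simp only [List.cons_append, fibVal, digitVal, List.length_append, List.length_singleton]
    push_cast [ih]
    split_ifs
    · linear_combination hfib
    · ring

theorem digitVal_goldenConj_append_singleton_mem (x : List Bool) (a : Bool)
    (h : ValidFib (x ++ [a])) :
    digitVal ψ (x ++ [a]) ∈ if a then Ioo (-ψ) φ else Ioo (-1) (-ψ) := by
  have hψ : ψ < 0 := goldenConj_neg
  have hψ1 : -1 < ψ := neg_one_lt_goldenConj
  have hψ2 : ψ ^ 2 = ψ + 1 := goldenConj_sq
  rw [← one_sub_goldenRatio]
  induction x using List.reverseRecOn generalizing a with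
  | nil =>
    cases a <;> simp [digitVal, hψ]
    constructor <;> linarith
  | append_singleton L b ih =>
    have hprev := ih b h.left_of_append
    rw [digitVal_append_singleton]
    cases a
    · have hw : digitVal ψ (L ++ [b]) ∈ Ioo (-1) (1 - ψ) := by
        cases b
        · exact Ioo_subset_Ioo_right (by linarith) hprev
        · exact Ioo_subset_Ioo_left (by linarith) hprev
      obtain ⟨hlo, hhi⟩ := hw
      simp only [Bool.toNat_false]
      constructor <;> push_cast <;>
        nlinarith [mul_lt_mul_of_neg_left hhi hψ, mul_lt_mul_of_neg_left hlo hψ]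
    · have hb : b = false := by
        simpa using (List.isChain_append.1 h).2.2 b (by simp) true rfl
      subst hb
      obtain ⟨hlo, hhi⟩ := hprev
      simp only [Bool.toNat_true]
      constructor <;> push_cast <;>
        nlinarith [mul_lt_mul_of_neg_left hhi hψ, mul_lt_mul_of_neg_left hlo hψ]

theorem fibVal_append_singleton_add_two_mem (x : List Bool) (a : Bool)
    (h : ValidFib (x ++ [a])) :
    (fibVal (x ++ [a]) + 2 : ℝ) ∈ Ico (φ * (fibVal x + 1)) (φ * (fibVal x + 2)) := by
  have hv := digitVal_goldenConj_append_singleton_mem x a h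
  have hψ : ψ < 0 := goldenConj_neg
  have hψ2 : ψ ^ 2 = ψ + 1 := goldenConj_sq
  rw [fibVal_append_singleton, ← one_sub_goldenRatio]
  rw [← one_sub_goldenRatio] at hv
  cases a <;> obtain ⟨hlo, hhi⟩ := hv <;> simp only [Bool.toNat_false, Bool.toNat_true] <;>
    push_cast <;> constructor <;>
    nlinarith [mul_lt_mul_of_neg_left hhi hψ, mul_lt_mul_of_neg_left hlo hψ]

theorem fibVal_eq_floor (x : List Bool) (a : Bool) (h : ValidFib (x ++ [a])) :
    (fibVal x : ℤ) =
      ⌊((fibVal (x ++ [a]) : ℝ) + 2) / ((1 + Real.sqrt 5) / 2)⌋ - 1 := by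
  obtain ⟨hlo, hhi⟩ := fibVal_append_singleton_add_two_mem x a h
  rw [eq_sub_iff_add_eq, eq_comm, Int.floor_eq_iff, ← goldenRatio, le_div_iff₀ goldenRatio_pos,
    div_lt_iff₀ goldenRatio_pos]
  push_cast
  constructor <;> linarith
end

section
/- There is an absolute constant C such that for every integer c ≥ 0 there exists a DFA over the alphabet {0,1}×{0,1} with at most C·(log₂(c+1)+1) states that accepts a word w if and only if, writing x for the word of first components of w and y for the word of second components, both x and y are valid Fibonacci representations and [x] + c = [y]. -/
/-!
Reading `x × y` msd-first, write `u` for the prefix read so far and `w` for the rest, of length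
`m`. Then `[y] - [x] = A F_{m+1} + B F_m + ([y_w] - [x_w])` with `(A, B) = fibDiff u`, so the left
quotient of the language by a valid `u` is determined by `(A, B)` and the last letter of `u`, and
by Myhill–Nerode it suffices to bound the pairs `(A, B)` whose quotient is nonempty.

Since `F_{n+1} - φ F_n = ψ ^ n`, the number `A - φ B` is a signed sum of distinct powers `ψ ^ k`,
`k ≥ 1`, so `|A - φ B| ≤ ∑ φ⁻ᵏ = φ`. Valid words of length `m` have value `< F_{m+2}`, so a
nonempty quotient forces `|A F_{m+1} + B F_m - c| < F_{m+2}`, and `φ F_{m+1} + F_m = φ ^ (m+1)`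
turns this into `|B - c / φ ^ (m+1)| < 2`. Hence `(A, B)` lies in a box of bounded size around
`(φ, 1) · c / φ ^ (m+1)`, and only `O(log c)` of these scales exceed `1`.
-/

open Real goldenRatio

universe u

theorem Language.exists_dfa_card_le {α : Type u} (L : Language α) (T : Finset (Language α))
    (hT : ∀ x, L.leftQuotient x ∈ T) :
    ∃ (σ : Type u) (_ : Fintype σ) (M : DFA α σ), Fintype.card σ ≤ T.card ∧ M.accepts = L := by
  have hsub : Set.range L.leftQuotient ⊆ T := by
    rintro _ ⟨x, rfl⟩
    exact hT x
  have : Finite (Set.range L.leftQuotient) := (T.finite_toSet.subset hsub).to_subtype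
  refine ⟨_, Fintype.ofFinite _, L.toDFA, ?_, L.accepts_toDFA⟩
  rw [Fintype.card_eq_nat_card, Nat.card_coe_set_eq, ← Set.ncard_coe_finset]
  exact Set.ncard_le_ncard hsub T.finite_toSet

theorem Real.fib_succ_le_goldenRatio_pow (n : ℕ) : (Nat.fib (n + 1) : ℝ) ≤ φ ^ n := by
  cases n with
  | zero => simp
  | succ n =>
    rw [← goldenRatio_mul_fib_succ_add_fib, Nat.fib_add_two, Nat.cast_add, add_comm]
    gcongr
    exact le_mul_of_one_le_left (Nat.cast_nonneg _) one_lt_goldenRatio.le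

theorem abs_sub_div_goldenRatio_pow_lt_two {A B c : ℝ} {m : ℕ} (hAB : |A - φ * B| ≤ φ)
    (h : |A * Nat.fib (m + 1) + B * Nat.fib m - c| < Nat.fib (m + 2)) :
    |B - c / φ ^ (m + 1)| < 2 := by
  have hpow : 0 < φ ^ (m + 1) := pow_pos goldenRatio_pos _
  have hsplit : B * φ ^ (m + 1) - c
      = (A * Nat.fib (m + 1) + B * Nat.fib m - c) - (A - φ * B) * Nat.fib (m + 1) := by
    rw [← goldenRatio_mul_fib_succ_add_fib]; ring
  have hF : (Nat.fib (m + 1) : ℝ) ≤ φ ^ m := fib_succ_le_goldenRatio_pow m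
  have hF' : (Nat.fib (m + 2) : ℝ) ≤ φ ^ (m + 1) := fib_succ_le_goldenRatio_pow (m + 1)
  have hbound : |B * φ ^ (m + 1) - c| < 2 * φ ^ (m + 1) := by
    calc |B * φ ^ (m + 1) - c|
        ≤ |A * Nat.fib (m + 1) + B * Nat.fib m - c| + |A - φ * B| * Nat.fib (m + 1) := by
          rw [hsplit]
          exact (abs_sub _ _).trans_eq (by rw [abs_mul, Nat.abs_cast])
      _ < φ ^ (m + 1) + φ * φ ^ m := by
          exact add_lt_add_of_lt_of_le (h.trans_le hF')
            (mul_le_mul hAB hF (Nat.cast_nonneg _) goldenRatio_pos.le)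
      _ = 2 * φ ^ (m + 1) := by ring
  rw [show B - c / φ ^ (m + 1) = (B * φ ^ (m + 1) - c) / φ ^ (m + 1) by field_simp,
    abs_div, abs_of_pos hpow, div_lt_iff₀ hpow]
  exact hbound

theorem natCast_lt_goldenRatio_pow_log (c : ℕ) :
    (c : ℝ) < φ ^ (2 * (Nat.log 2 (c + 1) + 1)) := by
  have h2 : (2 : ℝ) < φ ^ 2 := by rw [goldenRatio_sq]; linarith [one_lt_goldenRatio]
  calc (c : ℝ) < c + 1 := lt_add_one _
    _ < 2 ^ (Nat.log 2 (c + 1) + 1) := by exact_mod_cast Nat.lt_pow_succ_log_self one_lt_two _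
    _ ≤ (φ ^ 2) ^ (Nat.log 2 (c + 1) + 1) := by gcongr
    _ = φ ^ (2 * (Nat.log 2 (c + 1) + 1)) := by rw [← pow_mul]

def fibValShift : List Bool → ℕ
  | [] => 0
  | a :: rest => (if a then Nat.fib (rest.length + 1) else 0) + fibValShift rest

theorem fibVal_append (x z : List Bool) :
    fibVal (x ++ z) = fibVal x * Nat.fib (z.length + 1) + fibValShift x * Nat.fib z.length
      + fibVal z := by
  induction x with
  | nil => simp [fibVal, fibValShift]
  | cons a x ih =>
    have hfib : Nat.fib (x.length + z.length + 2) = Nat.fib (x.length + 1) * Nat.fib z.length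
        + Nat.fib (x.length + 2) * Nat.fib (z.length + 1) := by
      rw [← Nat.fib_add]; ring_nf
    cases a
    · simp [fibVal, fibValShift, ih]
    · simp only [List.cons_append, fibVal, fibValShift, ih, if_true, List.length_append, hfib]
      ring

theorem validFib_iff_isChain (x : List Bool) :
    ValidFib x ↔ x.IsChain (fun a b => a = false ∨ b = false) := Iff.rfl

theorem validFib_append_iff (x z : List Bool) :
    ValidFib (x ++ z) ↔ ValidFib x ∧ ValidFib (x.getLast?.toList ++ z) := by
  cases h : x.getLast? <;>
    simp_all [validFib_iff_isChain, List.isChain_append, List.isChain_cons, and_comm]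

theorem fibVal_lt_fib : ∀ x : List Bool, ValidFib x → fibVal x < Nat.fib (x.length + 2)
  | [], _ => by simp [fibVal]
  | [true], _ => by simp [fibVal, Nat.fib_add_two]
  | false :: x, h => by
    have hval : fibVal (false :: x) = fibVal x := by simp [fibVal]
    rw [hval]
    exact (fibVal_lt_fib x h.tail).trans_le (Nat.fib_mono (by simp))
  | true :: true :: x, h => by simp [validFib_iff_isChain] at h
  | true :: false :: x, h => by
    have hval : fibVal (true :: false :: x) = Nat.fib (x.length + 3) + fibVal x := by
      simp [fibVal]
    have hfib : Nat.fib (x.length + 4) = Nat.fib (x.length + 2) + Nat.fib (x.length + 3) :=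
      Nat.fib_add_two
    have := fibVal_lt_fib x h.tail.tail
    rw [hval, show (true :: false :: x).length + 2 = x.length + 4 by simp]
    omega

def fibDiff (w : List (Bool × Bool)) : ℤ × ℤ :=
  ((fibVal (w.map Prod.snd) : ℤ) - fibVal (w.map Prod.fst),
    (fibValShift (w.map Prod.snd) : ℤ) - fibValShift (w.map Prod.fst))

theorem fibDiff_cons_sub_goldenRatio_mul (p : Bool × Bool) (r : List (Bool × Bool)) :
    ∃ d : ℝ, |d| ≤ 1 ∧
      ((fibDiff (p :: r)).1 : ℝ) - φ * (fibDiff (p :: r)).2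
        = d * ψ ^ (r.length + 1) + (((fibDiff r).1 : ℝ) - φ * (fibDiff r).2) := by
  have hψ : (Nat.fib (r.length + 2) : ℝ) - φ * Nat.fib (r.length + 1) = ψ ^ (r.length + 1) :=
    fib_succ_sub_goldenRatio_mul_fib _
  obtain ⟨x, y⟩ := p
  refine ⟨(y.toNat : ℝ) - x.toNat, by cases x <;> cases y <;> norm_num, ?_⟩
  have hcast (a : Bool) (n : ℕ) : (((if a then n else 0 : ℕ) : ℤ) : ℝ) = a.toNat * n := by
    cases a <;> simp
  simp only [fibDiff, fibVal, fibValShift, List.map_cons, List.length_map, Nat.cast_add,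
    Int.cast_sub, Int.cast_add, hcast, Int.cast_natCast]
  linear_combination ((y.toNat : ℝ) - x.toNat) * hψ

theorem abs_fibDiff_sub_goldenRatio_mul_le_one_sub_inv_pow (w : List (Bool × Bool)) :
    |((fibDiff w).1 : ℝ) - φ * (fibDiff w).2| ≤ φ * (1 - φ⁻¹ ^ w.length) := by
  induction w with
  | nil => simp [fibDiff, fibVal, fibValShift]
  | cons p r ih =>
    obtain ⟨d, hd, hstep⟩ := fibDiff_cons_sub_goldenRatio_mul p r
    have habsψ : |ψ| = φ⁻¹ := by rw [inv_goldenRatio, abs_of_neg goldenConj_neg]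
    have hinv : φ⁻¹ = φ - 1 := by rw [inv_goldenRatio, ← one_sub_goldenConj]; ring
    rw [hstep, List.length_cons]
    calc |d * ψ ^ (r.length + 1) + (((fibDiff r).1 : ℝ) - φ * (fibDiff r).2)|
        ≤ |d| * |ψ| ^ (r.length + 1) + φ * (1 - φ⁻¹ ^ r.length) := by
          rw [← abs_pow, ← abs_mul]; exact (abs_add_le _ _).trans (by gcongr)
      _ ≤ φ⁻¹ ^ (r.length + 1) + φ * (1 - φ⁻¹ ^ r.length) := by
          rw [habsψ]; gcongr; exact mul_le_of_le_one_left (by positivity) hd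
      _ = φ * (1 - φ⁻¹ ^ (r.length + 1)) := by
          rw [pow_succ, hinv]; linear_combination (φ - 1) ^ r.length * goldenRatio_sq

theorem abs_fibDiff_sub_goldenRatio_mul_le (w : List (Bool × Bool)) :
    |((fibDiff w).1 : ℝ) - φ * (fibDiff w).2| ≤ φ := by
  refine (abs_fibDiff_sub_goldenRatio_mul_le_one_sub_inv_pow w).trans ?_
  have : 0 ≤ φ⁻¹ ^ w.length := by positivity
  nlinarith [goldenRatio_pos]

theorem fibVal_sub_fibVal_append (u w : List (Bool × Bool)) :
    (fibVal ((u ++ w).map Prod.snd) : ℤ) - fibVal ((u ++ w).map Prod.fst)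
      = (fibDiff u).1 * Nat.fib (w.length + 1) + (fibDiff u).2 * Nat.fib w.length
        + ((fibVal (w.map Prod.snd) : ℤ) - fibVal (w.map Prod.fst)) := by
  simp only [List.map_append, fibVal_append, fibDiff, List.length_map]
  push_cast
  ring

/-- The `2k` integers nearest to `x`. -/
noncomputable def window (x : ℝ) (k : ℕ) : Finset ℤ := Finset.Ico (⌊x⌋ + 1 - k) (⌊x⌋ + 1 + k)

theorem mem_window {t : ℤ} {x : ℝ} {k : ℕ} (h : |(t : ℝ) - x| < k) : t ∈ window x k := by
  rw [abs_lt] at h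
  have := Int.floor_le x
  have := Int.lt_floor_add_one x
  rw [window, Finset.mem_Ico, ← Int.sub_one_lt_iff]
  constructor <;> rw [← Int.cast_lt (R := ℝ)] <;> push_cast <;> linarith

theorem card_window (x : ℝ) (k : ℕ) : (window x k).card = 2 * k := by
  simp only [window, Int.card_Ico]
  omega

noncomputable def box (μ : ℝ) : Finset (ℤ × ℤ) := window (φ * μ) 8 ×ˢ window μ 3

theorem card_box (μ : ℝ) : (box μ).card = 96 := by
  simp [box, card_window]

theorem mem_box {A B : ℤ} {μ : ℝ} (hAB : |(A : ℝ) - φ * B| ≤ φ) (hB : |(B : ℝ) - μ| < 3) :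
    (A, B) ∈ box μ := by
  refine Finset.mem_product.mpr ⟨mem_window ?_, mem_window (by exact_mod_cast hB)⟩
  calc |(A : ℝ) - φ * μ| = |((A : ℝ) - φ * B) + φ * ((B : ℝ) - μ)| := by ring_nf
    _ ≤ φ + φ * 3 := by
      refine (abs_add_le _ _).trans (add_le_add hAB ?_)
      rw [abs_mul, abs_of_pos goldenRatio_pos]
      exact mul_le_mul_of_nonneg_left hB.le goldenRatio_pos.le
    _ < 8 := by linarith [goldenRatio_lt_two]

/-- Boxes around the scales `c / φ ^ m`; from `m = 2 (⌊log₂ (c + 1)⌋ + 1)` on the scale is below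
`1`, so the last box also serves all larger `m`. -/
noncomputable def liveBoxes (c : ℕ) : Finset (ℤ × ℤ) :=
  (Finset.Icc 1 (2 * (Nat.log 2 (c + 1) + 1))).biUnion fun m => box (c / φ ^ m)

theorem card_liveBoxes_le (c : ℕ) : (liveBoxes c).card ≤ 192 * (Nat.log 2 (c + 1) + 1) := by
  calc (liveBoxes c).card
      ≤ ∑ m ∈ Finset.Icc 1 (2 * (Nat.log 2 (c + 1) + 1)), (box (c / φ ^ m)).card :=
        Finset.card_biUnion_le
    _ = 192 * (Nat.log 2 (c + 1) + 1) := by simp [card_box]; ring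

theorem mem_liveBoxes {c : ℕ} {A B : ℤ} {m : ℕ} (hAB : |(A : ℝ) - φ * B| ≤ φ)
    (h : |(A : ℝ) * Nat.fib (m + 1) + B * Nat.fib m - c| < Nat.fib (m + 2)) :
    (A, B) ∈ liveBoxes c := by
  set N := 2 * (Nat.log 2 (c + 1) + 1)
  have hB := abs_sub_div_goldenRatio_pow_lt_two hAB h
  rcases le_or_gt (m + 1) N with hm | hm
  · exact Finset.mem_biUnion.mpr
      ⟨m + 1, Finset.mem_Icc.mpr ⟨by omega, hm⟩, mem_box hAB (hB.trans (by norm_num))⟩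
  · refine Finset.mem_biUnion.mpr ⟨N, Finset.mem_Icc.mpr ⟨by omega, le_rfl⟩, mem_box hAB ?_⟩
    have hc := natCast_lt_goldenRatio_pow_log c
    have hμ : ∀ n, N ≤ n → 0 ≤ (c : ℝ) / φ ^ n ∧ (c : ℝ) / φ ^ n ≤ 1 := fun n hn =>
      ⟨by positivity, div_le_one_of_le₀ (hc.le.trans (pow_le_pow_right₀ one_lt_goldenRatio.le hn))
        (by positivity)⟩
    obtain ⟨h0, h1⟩ := hμ (m + 1) hm.le
    obtain ⟨h0', h1'⟩ := hμ N le_rfl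
    rw [abs_lt] at hB ⊢
    constructor <;> linarith

def fibAddLang (c : ℕ) : Language (Bool × Bool) :=
  {w | ValidFib (w.map Prod.fst) ∧ ValidFib (w.map Prod.snd) ∧
    fibVal (w.map Prod.fst) + c = fibVal (w.map Prod.snd)}

theorem mem_fibAddLang {c : ℕ} {w : List (Bool × Bool)} :
    w ∈ fibAddLang c ↔ ValidFib (w.map Prod.fst) ∧ ValidFib (w.map Prod.snd) ∧
      fibVal (w.map Prod.fst) + c = fibVal (w.map Prod.snd) := Iff.rfl

def fibAddCompletions (c : ℕ) (s : ℤ × ℤ) (last : Option (Bool × Bool)) :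
    Language (Bool × Bool) :=
  {w | ValidFib ((last.map Prod.fst).toList ++ w.map Prod.fst) ∧
    ValidFib ((last.map Prod.snd).toList ++ w.map Prod.snd) ∧
    s.1 * Nat.fib (w.length + 1) + s.2 * Nat.fib w.length
      + ((fibVal (w.map Prod.snd) : ℤ) - fibVal (w.map Prod.fst)) = c}

theorem mem_fibAddCompletions {c : ℕ} {s : ℤ × ℤ} {last : Option (Bool × Bool)}
    {w : List (Bool × Bool)} :
    w ∈ fibAddCompletions c s last ↔
      ValidFib ((last.map Prod.fst).toList ++ w.map Prod.fst) ∧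
      ValidFib ((last.map Prod.snd).toList ++ w.map Prod.snd) ∧
      s.1 * Nat.fib (w.length + 1) + s.2 * Nat.fib w.length
        + ((fibVal (w.map Prod.snd) : ℤ) - fibVal (w.map Prod.fst)) = c := Iff.rfl

theorem leftQuotient_fibAddLang {c : ℕ} {u : List (Bool × Bool)}
    (hx : ValidFib (u.map Prod.fst)) (hy : ValidFib (u.map Prod.snd)) :
    (fibAddLang c).leftQuotient u = fibAddCompletions c (fibDiff u) u.getLast? := by
  refine Language.ext fun w => ?_
  have hval := fibVal_sub_fibVal_append u w
  rw [Language.mem_leftQuotient, mem_fibAddLang, mem_fibAddCompletions, List.map_append,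
    List.map_append, validFib_append_iff (u.map Prod.fst), validFib_append_iff (u.map Prod.snd),
    List.getLast?_map, List.getLast?_map]
  simp only [List.map_append] at hval
  simp only [hx, hy, true_and]
  refine and_congr_right fun _ => and_congr_right fun _ => ?_
  omega

theorem fibDiff_mem_liveBoxes {c : ℕ} {u w : List (Bool × Bool)} (h : u ++ w ∈ fibAddLang c) :
    fibDiff u ∈ liveBoxes c := by
  obtain ⟨hx, hy, hsum⟩ := mem_fibAddLang.mp h
  rw [List.map_append] at hx hy
  have hxw := fibVal_lt_fib _ hx.right_of_append
  have hyw := fibVal_lt_fib _ hy.right_of_append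
  have hval := fibVal_sub_fibVal_append u w
  have hAB := abs_fibDiff_sub_goldenRatio_mul_le u
  generalize fibDiff u = s at hval hAB ⊢
  obtain ⟨A, B⟩ := s
  dsimp only at hval hAB
  simp only [List.length_map] at hxw hyw
  have hlive : |A * (Nat.fib (w.length + 1) : ℤ) + B * Nat.fib w.length - c|
      < Nat.fib (w.length + 2) := by
    rw [abs_lt]; constructor <;> omega
  exact mem_liveBoxes hAB (by exact_mod_cast hlive)

open scoped Classical in
noncomputable def fibAddQuotients (c : ℕ) : Finset (Language (Bool × Bool)) :=
  insert 0 ((liveBoxes c ×ˢ Finset.univ).image fun k => fibAddCompletions c k.1 k.2)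

theorem leftQuotient_mem_fibAddQuotients (c : ℕ) (u : List (Bool × Bool)) :
    (fibAddLang c).leftQuotient u ∈ fibAddQuotients c := by
  classical
  by_cases hlive : ∃ w, u ++ w ∈ fibAddLang c
  · obtain ⟨w, hw⟩ := hlive
    obtain ⟨hx, hy, -⟩ := mem_fibAddLang.mp hw
    rw [List.map_append] at hx hy
    rw [leftQuotient_fibAddLang hx.left_of_append hy.left_of_append]
    refine Finset.mem_insert_of_mem (Finset.mem_image.mpr ⟨(fibDiff u, u.getLast?), ?_, rfl⟩)
    exact Finset.mem_product.mpr ⟨fibDiff_mem_liveBoxes hw, Finset.mem_univ _⟩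
  · have hzero : (fibAddLang c).leftQuotient u = 0 :=
      Language.ext fun w => iff_of_false (fun hw => hlive ⟨w, hw⟩) (Language.notMem_zero w)
    rw [hzero]
    exact Finset.mem_insert_self _ _

theorem card_fibAddQuotients_le (c : ℕ) :
    (fibAddQuotients c).card ≤ 961 * (Nat.log 2 (c + 1) + 1) := by
  classical
  have hboxes := card_liveBoxes_le c
  calc (fibAddQuotients c).card
      ≤ (liveBoxes c ×ˢ (Finset.univ : Finset (Option (Bool × Bool)))).card + 1 :=
        (Finset.card_insert_le _ _).trans (Nat.add_le_add_right Finset.card_image_le 1)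
    _ ≤ 961 * (Nat.log 2 (c + 1) + 1) := by
        rw [Finset.card_product, Finset.card_univ]
        simp only [Fintype.card_option, Fintype.card_prod, Fintype.card_bool]
        omega

theorem addition_const_state_complexity :
    ∃ C : ℕ, ∀ c : ℕ, ∃ (σ : Type) (_ : Fintype σ) (M : DFA (Bool × Bool) σ),
      Fintype.card σ ≤ C * (Nat.log 2 (c + 1) + 1) ∧
      ∀ w : List (Bool × Bool),
        w ∈ M.accepts ↔
          ValidFib (w.map Prod.fst) ∧ ValidFib (w.map Prod.snd) ∧
            fibVal (w.map Prod.fst) + c = fibVal (w.map Prod.snd) := by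
  refine ⟨961, fun c => ?_⟩
  obtain ⟨σ, hσ, M, hcard, hM⟩ :=
    (fibAddLang c).exists_dfa_card_le _ (leftQuotient_mem_fibAddQuotients c)
  exact ⟨σ, hσ, M, hcard.trans (card_fibAddQuotients_le c), fun w => by rw [hM]; rfl⟩
end

section
/- Let n ≥ 1 be an integer, let x and y be valid Fibonacci representations, and let a, b ∈ {0,1}. If [y] − n[x] ≤ −n−1, then [yb] − n[xa] ≤ −n−1. -/
/-- The numerical value of a single bit. -/
def bitVal (a : Bool) : ℤ := if a then 1 else 0

open goldenRatio

def shiftedFibVal : List Bool → ℕ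
  | [] => 0
  | a :: rest => (if a then Nat.fib (rest.length + 1) else 0) + shiftedFibVal rest

lemma fibVal_append_singleton_s8 (w : List Bool) (b : Bool) :
    fibVal (w ++ [b]) = fibVal w + shiftedFibVal w + b.toNat := by
  induction w with
  | nil => cases b <;> rfl
  | cons c w ih =>
    simp only [List.cons_append, fibVal, shiftedFibVal, List.length_append,
      List.length_singleton, add_assoc, Nat.reduceAdd, ih, Nat.fib_add_two (n := w.length + 1)]
    cases c <;> simp only [if_true, if_false, Bool.false_eq_true] <;> omega

lemma shiftedFibVal_append_singleton (w : List Bool) (b : Bool) :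
    shiftedFibVal (w ++ [b]) = fibVal w + b.toNat := by
  induction w with
  | nil => cases b <;> rfl
  | cons c w ih =>
    simp only [List.cons_append, fibVal, shiftedFibVal, List.length_append,
      List.length_singleton, add_assoc, Nat.reduceAdd, ih]

lemma goldenRatio_bounds_step {m t b : ℝ} (hb₀ : 0 ≤ b) (hb₁ : b ≤ 1)
    (hlo : φ * t < m + 1) (hhi : m + 1 < φ * (t + 1)) :
    φ * (m + b) < m + t + b + 1 ∧ m + t + b + 1 < φ * (m + b + 1) := by
  have hφ := Real.goldenRatio_sq
  have hφ₀ := Real.goldenRatio_pos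
  constructor
  · have key : φ * (m + t + b + 1 - φ * (m + b)) = φ * (t + 1) - (m + b) := by
      linear_combination (-(m + b)) * hφ
    nlinarith
  · have key : φ * (φ * (m + b + 1) - (m + t + b + 1)) = m + b + 1 - φ * t := by
      linear_combination (m + b + 1) * hφ
    nlinarith

lemma goldenRatio_mul_shiftedFibVal_bounds (w : List Bool) :
    φ * shiftedFibVal w < fibVal w + 1 ∧ (fibVal w : ℝ) + 1 < φ * (shiftedFibVal w + 1) := by
  induction w using List.reverseRecOn with
  | nil => simpa [fibVal, shiftedFibVal] using Real.one_lt_goldenRatio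
  | append_singleton w b ih =>
    rw [fibVal_append_singleton_s8, shiftedFibVal_append_singleton]
    push_cast
    exact goldenRatio_bounds_step (by positivity) (by cases b <;> simp) ih.1 ih.2

lemma diff_append_lt_of_goldenRatio_bounds {n mx my tx ty a b : ℝ} (hn : 0 ≤ n) (ha : 0 ≤ a)
    (hb : b ≤ 1) (hx : mx + 1 < φ * (tx + 1)) (hy : φ * ty < my + 1)
    (h : my - n * mx ≤ -n - 1) :
    (my + ty + b) - n * (mx + tx + a) < -n := by
  have hφ := Real.goldenRatio_sq
  have hφ₂ := Real.goldenRatio_lt_two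
  have hφ₀ := Real.goldenRatio_pos
  have hscaled : φ * ((my + ty + b) - n * (mx + tx + a)) < -2 * n := by
    nlinarith [mul_le_mul_of_nonneg_left hx.le hn, mul_le_mul_of_nonneg_left h (sq_nonneg φ),
      mul_le_mul_of_nonneg_left hb hφ₀.le, mul_nonneg (mul_nonneg hn ha) hφ₀.le]
  nlinarith

theorem diff_stays_low_general (n : ℕ) (x y : List Bool) (a b : Bool)
    (h : (fibVal y : ℤ) - n * fibVal x ≤ -(n : ℤ) - 1) :
    (fibVal (y ++ [b]) : ℤ) - n * fibVal (x ++ [a]) ≤ -(n : ℤ) - 1 := by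
  suffices hlt : ((fibVal (y ++ [b]) : ℤ) - n * fibVal (x ++ [a]) : ℝ) < -(n : ℤ) by
    exact Int.le_sub_one_of_lt (by exact_mod_cast hlt)
  rw [fibVal_append_singleton_s8, fibVal_append_singleton_s8]
  push_cast
  exact diff_append_lt_of_goldenRatio_bounds n.cast_nonneg (by positivity) (by cases b <;> simp)
    (goldenRatio_mul_shiftedFibVal_bounds x).2 (goldenRatio_mul_shiftedFibVal_bounds y).1
    (by exact_mod_cast h)

theorem diff_stays_low (n : ℕ) (hn : 1 ≤ n) (x y : List Bool)
    (hx : ValidFib x) (hy : ValidFib y) (a b : Bool)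
    (h : (fibVal y : ℤ) - n * fibVal x ≤ -(n : ℤ) - 1) :
    (fibVal (y ++ [b]) : ℤ) - n * fibVal (x ++ [a]) ≤ -(n : ℤ) - 1 :=
  diff_stays_low_general n x y a b h
end

section
/- Let n ≥ 1 be an integer, let x and y be binary words of the same length, and let a, a', b, b' ∈ {0,1} with a = 0 or a' = 0. If [y] − n[x] ≥ n and [yb'] − n[xa'] ≥ n, then [yb'b] − n[xa'a] ≥ n. -/
lemma fibVal_append_two (w : List Bool) (c' c : Bool) :
    fibVal (w ++ [c', c]) = fibVal (w ++ [c']) + fibVal w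
      + (if c' then 1 else 0) + (if c then 1 else 0) := by
  induction w with
  | nil => cases c' <;> cases c <;> simp [fibVal, Nat.fib]
  | cons d rest ih =>
      simp only [List.cons_append, fibVal, List.length_append, List.length]
      have hf : Nat.fib (rest.length + 1 + 2 + 1) =
          Nat.fib (rest.length + 1 + 2) + Nat.fib (rest.length + 2) := by
        rw [show rest.length + 1 + 2 + 1 = (rest.length + 2) + 2 by ring,
          Nat.fib_add_two]
        ring
      cases d <;> simp [hf, ih] <;> ring

set_option maxHeartbeats 2000000 in
theorem diff_stays_high_of_ge_n (n : ℕ) (hn : 1 ≤ n) (x y : List Bool)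
    (hlen : x.length = y.length) (a a' b b' : Bool)
    (ha : a = false ∨ a' = false)
    (h1 : (fibVal y : ℤ) - n * fibVal x ≥ n)
    (h2 : (fibVal (y ++ [b']) : ℤ) - n * fibVal (x ++ [a']) ≥ n) :
    (fibVal (y ++ [b', b]) : ℤ) - n * fibVal (x ++ [a', a]) ≥ n := by
  have hy := fibVal_append_two y b' b
  have hx := fibVal_append_two x a' a
  have key : ∀ Y0 Y1 X0 X1 k m : ℤ, 0 ≤ k → 0 ≤ m → m ≤ 1 →
      Y0 - n * X0 ≥ n → Y1 - n * X1 ≥ n →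
      (Y1 + Y0 + k) - n * (X1 + X0 + m) ≥ n := by
    intro Y0 Y1 X0 X1 k m hk hm hm1 g1 g2
    have hnn : (1:ℤ) ≤ (n:ℤ) := by exact_mod_cast hn
    nlinarith
  cases a <;> cases a' <;> cases b' <;> cases b <;>
    simp only [Bool.false_eq_true, reduceIte, Nat.add_zero] at hy hx <;>
    first
      | (rw [hy, hx]; push_cast; nlinarith)
      | simp at ha
end

section
/- There is an absolute constant C such that for every integer c ≥ 0 the sequence i ↦ t(i+c) is generated by a Fibonacci-DFAO with at most C·(c+1) states, where t is the Fibonacci–Thue–Morse sequence: t(i) is the number of 1s in the valid Fibonacci (Zeckendorf) representation of i, taken modulo 2. -/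
/-- A deterministic finite automaton with output (DFAO). -/
structure DFAO (α : Type*) (σ : Type*) (Δ : Type*) where
  step : σ → α → σ
  start : σ
  out : σ → Δ

/-- The output of a DFAO on an input word. -/
def DFAO.eval {α σ Δ : Type*} (M : DFAO α σ Δ) (w : List α) : Δ :=
  M.out (w.foldl M.step M.start)

/-- `h : ℕ → Δ` is generated by a Fibonacci-DFAO with at most `m` states:
there is a DFAO with input alphabet `{0,1}` and at most `m` states whose output on
every valid Fibonacci representation `w` (leading zeros allowed) is `h [w]`. -/
def FibGeneratedBy {Δ : Type*} (h : ℕ → Δ) (m : ℕ) : Prop :=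
  ∃ (σ : Type) (_ : Fintype σ) (M : DFAO Bool σ Δ),
    Fintype.card σ ≤ m ∧ ∀ w : List Bool, ValidFib w → M.eval w = h (fibVal w)

/-- The Fibonacci–Thue–Morse sequence: the number of 1s in the Zeckendorf
representation of `i`, taken modulo 2.  (`Nat.zeckendorf i` lists the indices of
the Fibonacci numbers appearing in the Zeckendorf representation of `i`.) -/
def fibThueMorse (i : ℕ) : ℕ := (Nat.zeckendorf i).length % 2


/-!
Pad the input with `d = greatestFib c` leading zeros and split it as `H ++ W` with `|W| = d`.
Then `[x] + c = [H 0^d] + v` with `v = [W] + c < F (d + 3)`, and adding such a `v` to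
`[H 0^d]` only disturbs the last few digits of `H`: the parity of the Zeckendorf length of the
sum, corrected by the number of ones in `H`, depends only on whether `H` ends like `ε`, `1`,
`10` or `101` (a suffix `1010` carries into `F (d + 6)` and behaves like `ε`).
An automaton can track this suffix class, the parity of the ones of `H`, and the window `W`;
there are at most `F (d + 2) ≤ 3 (c + 1)` valid windows.
-/

namespace FibThueMorse

open List Nat

theorem fibVal_replicate_false_append (n : ℕ) (x : List Bool) :
    fibVal (replicate n false ++ x) = fibVal x := by
  induction n with
  | zero => rfl
  | succ n ih => simpa [replicate_succ, fibVal] using ih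

theorem fibVal_replicate_false (n : ℕ) : fibVal (replicate n false) = 0 := by
  simpa [fibVal] using fibVal_replicate_false_append n []

theorem fibVal_append (u w : List Bool) :
    fibVal (u ++ w) = fibVal (u ++ replicate w.length false) + fibVal w := by
  induction u with
  | nil => simp [fibVal_replicate_false]
  | cons a u ih => simp only [cons_append, fibVal, ih, length_append, length_replicate]; ring

theorem validFib_replicate_false_append (n : ℕ) {x : List Bool} (hx : ValidFib x) :
    ValidFib (replicate n false ++ x) := by
  induction n with
  | zero => simpa
  | succ n ih => exact isChain_cons.2 ⟨fun _ _ => Or.inl rfl, ih⟩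

instance : DecidablePred ValidFib := fun w => inferInstanceAs (Decidable (IsChain _ w))

theorem fibVal_lt_fib : ∀ {w : List Bool}, ValidFib w → fibVal w < fib (w.length + 2)
  | [], _ => by simp [fibVal]
  | [true], _ => by simp [fibVal, fib_add_two]
  | false :: r, h => by
    simpa [fibVal] using (fibVal_lt_fib (w := r) h.tail).trans_le (fib_mono (by omega))
  | true :: false :: r, h => by
    have := fibVal_lt_fib (w := r) h.tail.tail
    simp only [fibVal, length_cons, if_true, Bool.false_eq_true, if_false, zero_add]
    have e : fib (r.length + 1 + 1 + 2) = fib (r.length + 2) + fib (r.length + 1 + 2) :=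
      fib_add_two
    omega
  | true :: true :: _, h => by simpa using (isChain_cons_cons.1 h).1

theorem eq_of_fibVal_eq_of_length_eq :
    ∀ {u w : List Bool}, u.length = w.length → ValidFib u → ValidFib w →
      fibVal u = fibVal w → u = w
  | [], [], _, _, _, _ => rfl
  | a :: u, b :: w, hl, hu, hw, he => by
    simp only [length_cons, Nat.add_right_cancel_iff] at hl
    have hu' := fibVal_lt_fib (w := u) hu.tail
    have hw' := fibVal_lt_fib (w := w) hw.tail
    rw [hl] at hu'
    have hab : a = b := by
      cases a <;> cases b <;> simp only [fibVal, hl, if_true, Bool.false_eq_true, if_false] at he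
        <;> first | rfl | omega
    subst hab
    have he' : fibVal u = fibVal w := by cases a <;> simpa [fibVal, hl] using he
    rw [eq_of_fibVal_eq_of_length_eq hl hu.tail hw.tail he']

abbrev Window (d : ℕ) : Type := {w : List Bool // w.length = d ∧ ValidFib w}

def Window.toFin {d : ℕ} (W : Window d) : Fin (fib (d + 2)) :=
  ⟨fibVal W.1, by simpa [W.2.1] using fibVal_lt_fib W.2.2⟩

theorem Window.toFin_injective (d : ℕ) : Function.Injective (Window.toFin (d := d)) :=
  fun W W' h => Subtype.ext <|
    eq_of_fibVal_eq_of_length_eq (W.2.1.trans W'.2.1.symm) W.2.2 W'.2.2 (congrArg Fin.val h)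

noncomputable instance (d : ℕ) : Fintype (Window d) :=
  Fintype.ofInjective _ (Window.toFin_injective d)

theorem Window.card_le (d : ℕ) : Fintype.card (Window d) ≤ fib (d + 2) := by
  simpa using Fintype.card_le_of_injective _ (Window.toFin_injective d)

def Window.zeros (d : ℕ) : Window d :=
  ⟨replicate d false, length_replicate,
    by simpa using validFib_replicate_false_append d isChain_nil⟩

/-- Feeds `δ` the input delayed by `d` letters, the last `d` letters being held in the window
(which is left unchanged once the input stops being a valid Fibonacci representation). -/
def delayStep {Q : Type*} (δ : Q → Bool → Q) (d : ℕ) (s : Q × Window d) (b : Bool) :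
    Q × Window d :=
  (δ s.1 ((s.2.1 ++ [b]).head (by simp)),
    if h : ValidFib (s.2.1 ++ [b]).tail then ⟨(s.2.1 ++ [b]).tail, by simp [s.2.2.1], h⟩
    else s.2)

theorem foldl_delayStep {Q : Type*} (δ : Q → Bool → Q) (q₀ : Q) (d : ℕ) {x : List Bool}
    (hx : ValidFib x) :
    ∃ (H : List Bool) (W : Window d), replicate d false ++ x = H ++ W.1 ∧
      x.foldl (delayStep δ d) (q₀, Window.zeros d) = (H.foldl δ q₀, W) := by
  induction x using reverseRecOn with
  | nil => exact ⟨[], Window.zeros d, by simp [Window.zeros], rfl⟩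
  | append_singleton x b ih =>
    obtain ⟨H, W, hsplit, hfold⟩ := ih hx.left_of_append
    have hne : W.1 ++ [b] ≠ [] := by simp
    have hsplit' : replicate d false ++ (x ++ [b]) =
        (H ++ [(W.1 ++ [b]).head hne]) ++ (W.1 ++ [b]).tail := by
      rw [← append_assoc, hsplit, append_assoc, append_assoc, singleton_append,
        cons_head_tail]
    have htail : ValidFib (W.1 ++ [b]).tail := by
      have := validFib_replicate_false_append d hx
      rw [hsplit'] at this
      exact this.right_of_append
    refine ⟨_, ⟨_, by simp [W.2.1], htail⟩, hsplit', ?_⟩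
    rw [foldl_append, hfold, foldl_append]
    simp [delayStep, htail]

inductive SuffixClass
  | empty | one | oneZero | oneZeroOne
  deriving DecidableEq

namespace SuffixClass

instance : Fintype SuffixClass :=
  ⟨{empty, one, oneZero, oneZeroOne}, fun q => by cases q <;> simp⟩

def rep : SuffixClass → List Bool
  | empty => []
  | one => [true]
  | oneZero => [true, false]
  | oneZeroOne => [true, false, true]

def step : SuffixClass → Bool → SuffixClass
  | empty, false => empty
  | empty, true => one
  | one, _ => oneZero
  | oneZero, false => empty
  | oneZero, true => oneZeroOne
  | oneZeroOne, _ => empty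

def ofWord (H : List Bool) : SuffixClass := H.foldl step empty

theorem ofWord_concat (H : List Bool) (b : Bool) : ofWord (H ++ [b]) = (ofWord H).step b := by
  simp [ofWord]

theorem ofWord_eq_empty_or_oneZero {H : List Bool} (h : ValidFib (H ++ [true])) :
    ofWord H = empty ∨ ofWord H = oneZero := by
  rcases H.eq_nil_or_concat with rfl | ⟨L, b, rfl⟩
  · exact Or.inl rfl
  · rw [concat_eq_append] at h ⊢
    obtain rfl : b = false := by simpa using (isChain_append.1 h).2.2 b (by simp) true rfl
    rw [ofWord_concat]
    cases ofWord L <;> simp [step]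

end SuffixClass

theorem zeckendorf_fib_add {k v : ℕ} (hv : v < fib (k + 1)) :
    zeckendorf (fib (k + 2) + v) = (k + 2) :: zeckendorf v := by
  have f3 : fib (k + 3) = fib (k + 1) + fib (k + 2) := fib_add_two
  have hgf : greatestFib (fib (k + 2) + v) = k + 2 :=
    le_antisymm (Nat.lt_succ_iff.1 (greatestFib_lt.2 (show _ < fib (k + 3) by omega)))
      (le_greatestFib.2 (by omega))
  have hpos : 0 < fib (k + 2) + v := Nat.add_pos_left (fib_pos.2 (by omega)) v
  rw [zeckendorf_of_pos hpos, hgf, Nat.add_sub_cancel_left]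

def zeckParity (n : ℕ) : ZMod 2 := (zeckendorf n).length

theorem zeckParity_fib_add {k v : ℕ} (hv : v < fib (k + 1)) :
    zeckParity (fib (k + 2) + v) = zeckParity v + 1 := by
  rw [zeckParity, zeckendorf_fib_add hv, length_cons, Nat.cast_succ, zeckParity]

/-- The only possible carry is `F (k + 2) + F (k + 3) + F (k + 5) = F (k + 6)`. -/
theorem zeckParity_fib_add_fib_add {k v : ℕ} (hv : v < fib (k + 3)) :
    zeckParity (fib (k + 5) + (fib (k + 3) + v)) = zeckParity v := by
  have f4 : fib (k + 4) = fib (k + 2) + fib (k + 3) := fib_add_two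
  have f3 : fib (k + 3) = fib (k + 1) + fib (k + 2) := fib_add_two
  rcases Nat.lt_or_ge v (fib (k + 2)) with hlt | hge
  · rw [zeckParity_fib_add (k := k + 3) (show _ < fib (k + 4) by omega),
      zeckParity_fib_add (k := k + 1) hlt, add_assoc, ZModModule.add_self, add_zero]
  · obtain ⟨u, rfl⟩ := Nat.exists_eq_add_of_le hge
    have hu : u < fib (k + 1) := by omega
    have f6 : fib (k + 6) = fib (k + 4) + fib (k + 5) := fib_add_two
    rw [show fib (k + 5) + (fib (k + 3) + (fib (k + 2) + u)) = fib (k + 6) + u by omega,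
      zeckParity_fib_add (k := k + 4) (hu.trans_le (fib_mono (by omega))),
      zeckParity_fib_add hu]

theorem fibThueMorse_eq_val_zeckParity (n : ℕ) : fibThueMorse n = (zeckParity n).val :=
  (ZMod.val_natCast 2 _).symm

/-- Measures the carries in `[H 0^k] + v`: it is `zeckParity v` when no carry occurs. -/
def defect (k : ℕ) (H : List Bool) (v : ℕ) : ZMod 2 :=
  zeckParity (fibVal (H ++ replicate k false) + v) + H.count true

def DefectEquiv (H H' : List Bool) : Prop :=
  ∀ k v, v < fib (k + 3) → defect k H v = defect k H' v

theorem DefectEquiv.trans {H H' H'' : List Bool} (h : DefectEquiv H H')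
    (h' : DefectEquiv H' H'') : DefectEquiv H H'' :=
  fun k v hv => (h k v hv).trans (h' k v hv)

theorem defect_concat (k : ℕ) (H : List Bool) (b : Bool) (v : ℕ) :
    defect k (H ++ [b]) v =
      defect (k + 1) H ((if b then fib (k + 2) else 0) + v) + (if b then 1 else 0) := by
  have hval : fibVal (H ++ [b] ++ replicate k false) =
      fibVal (H ++ replicate (k + 1) false) + (if b then fib (k + 2) else 0) := by
    rw [append_assoc, fibVal_append]
    simp [fibVal, fibVal_replicate_false]
  simp only [defect, hval, count_append, count_singleton, Nat.cast_add]
  cases b <;> simp [add_comm, add_left_comm, add_assoc]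

theorem DefectEquiv.concat {H H' : List Bool} (h : DefectEquiv H H') (b : Bool) :
    DefectEquiv (H ++ [b]) (H' ++ [b]) := by
  intro k v hv
  have hv' : (if b then fib (k + 2) else 0) + v < fib (k + 1 + 3) := by
    have : fib (k + 1 + 3) = fib (k + 2) + fib (k + 3) := fib_add_two
    cases b <;> simp only [if_true, Bool.false_eq_true, if_false, zero_add] <;> omega
  rw [defect_concat, defect_concat, h _ _ hv']

open SuffixClass in
theorem defectEquiv_rep_concat (q : SuffixClass) (b : Bool)
    (hqb : b = true → q = empty ∨ q = oneZero) : DefectEquiv (q.rep ++ [b]) (q.step b).rep := by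
  intro k v hv
  have h2 : (2 : ZMod 2) = 0 := rfl
  cases q <;> cases b <;> simp only [reduceCtorEq, or_self, imp_false, not_true] at hqb
  case empty.false => simp [defect, rep, step, fibVal, fibVal_replicate_false]
  case oneZero.false =>
    simp [defect, rep, step, fibVal, fibVal_replicate_false]
    rw [show k + 1 + 1 + 2 = k + 2 + 2 by ring, zeckParity_fib_add hv, add_assoc,
      one_add_one_eq_two, h2, add_zero]
  case oneZeroOne.false =>
    simp [defect, rep, step, fibVal, fibVal_replicate_false]
    rw [show k + 1 + 1 + 1 + 2 = k + 5 by ring, show k + 1 + 2 = k + 3 by ring,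
      add_assoc (fib _), zeckParity_fib_add_fib_add hv, h2, add_zero]
  all_goals rfl

theorem defectEquiv_rep_ofWord {H : List Bool} (hH : ValidFib H) :
    DefectEquiv H (SuffixClass.ofWord H).rep := by
  induction H using reverseRecOn with
  | nil => exact fun _ _ _ => rfl
  | append_singleton H b ih =>
    rw [SuffixClass.ofWord_concat]
    refine ((ih hH.left_of_append).concat b).trans (defectEquiv_rep_concat _ b ?_)
    rintro rfl
    exact SuffixClass.ofWord_eq_empty_or_oneZero hH

def classParityStep (s : SuffixClass × ZMod 2) (b : Bool) : SuffixClass × ZMod 2 :=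
  (s.1.step b, s.2 + if b then 1 else 0)

theorem foldl_classParityStep (H : List Bool) :
    H.foldl classParityStep (.empty, 0) = (SuffixClass.ofWord H, (H.count true : ZMod 2)) := by
  induction H using reverseRecOn with
  | nil => rfl
  | append_singleton H b ih =>
    rw [foldl_append, ih, SuffixClass.ofWord_concat]
    cases b <;> simp [classParityStep]

theorem fib_add_two_le (n : ℕ) : fib (n + 2) ≤ 3 * fib n + 1 := by
  rcases n with _ | n
  · simp
  · have h₁ : fib (n + 1 + 2) = fib (n + 1) + fib (n + 2) := fib_add_two
    have h₂ : fib (n + 2) = fib n + fib (n + 1) := fib_add_two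
    have h₃ : fib n ≤ fib (n + 1) := fib_le_fib_succ
    omega

def shiftAutomaton (c : ℕ) :
    DFAO Bool ((SuffixClass × ZMod 2) × Window (greatestFib c)) ℕ where
  step := delayStep classParityStep (greatestFib c)
  start := ((.empty, 0), Window.zeros _)
  out s := (defect (greatestFib c) s.1.1.rep (fibVal s.2.1 + c) + s.1.2).val

theorem card_shiftAutomaton_states (c : ℕ) :
    Fintype.card ((SuffixClass × ZMod 2) × Window (greatestFib c)) ≤ 24 * (c + 1) := by
  have hcard : Fintype.card SuffixClass = 4 := rfl
  have := Window.card_le (greatestFib c)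
  have := fib_add_two_le (greatestFib c)
  have := fib_greatestFib_le c
  simp only [Fintype.card_prod, hcard, ZMod.card]
  omega

theorem shiftAutomaton_eval (c : ℕ) {x : List Bool} (hx : ValidFib x) :
    (shiftAutomaton c).eval x = fibThueMorse (fibVal x + c) := by
  obtain ⟨H, W, hsplit, hfold⟩ := foldl_delayStep classParityStep (.empty, 0) (greatestFib c) hx
  have hH : ValidFib H := by
    have := validFib_replicate_false_append (greatestFib c) hx
    rw [hsplit] at this
    exact this.left_of_append
  have hval : fibVal x = fibVal (H ++ replicate (greatestFib c) false) + fibVal W.1 := by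
    rw [← fibVal_replicate_false_append (greatestFib c) x, hsplit, fibVal_append, W.2.1]
  have hv : fibVal W.1 + c < fib (greatestFib c + 3) := by
    have hW := fibVal_lt_fib W.2.2
    rw [W.2.1] at hW
    have := lt_fib_greatestFib_add_one c
    have : fib (greatestFib c + 3) = fib (greatestFib c + 1) + fib (greatestFib c + 2) :=
      fib_add_two
    omega
  simp only [DFAO.eval, shiftAutomaton, hfold, foldl_classParityStep]
  rw [← defectEquiv_rep_ofWord hH _ _ hv, defect, hval, fibThueMorse_eq_val_zeckParity,
    add_assoc, add_assoc, ZModModule.add_self, add_zero]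

end FibThueMorse

theorem fibThueMorse_shift_state_complexity :
    ∃ C : ℕ, ∀ c : ℕ,
      FibGeneratedBy (fun i => fibThueMorse (i + c)) (C * (c + 1)) :=
  ⟨24, fun c => ⟨_, inferInstance, FibThueMorse.shiftAutomaton c,
    FibThueMorse.card_shiftAutomaton_states c,
    fun _ hx => FibThueMorse.shiftAutomaton_eval c hx⟩⟩
end

section
/- There is an absolute constant C such that for every integer c ≥ 0 there exists a DFA over the alphabet {0,1} with at most C·(log₂(c+1)+1) states accepting exactly the language { x ∈ {0,1}* : x is a valid Fibonacci representation and [x] = c }. -/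
open List Nat

@[simp] lemma fibVal_nil : fibVal [] = 0 := rfl

@[simp] lemma fibVal_cons_false (w : List Bool) : fibVal (false :: w) = fibVal w := by
  simp [fibVal]

@[simp] lemma fibVal_cons_true (w : List Bool) :
    fibVal (true :: w) = fib (w.length + 2) + fibVal w := rfl

@[simp] lemma fibVal_replicate_false_append (k : ℕ) (w : List Bool) :
    fibVal (replicate k false ++ w) = fibVal w := by
  induction k with
  | zero => rfl
  | succ k ih => simpa [replicate_succ] using ih

lemma validFib_cons_cons {a b : Bool} {w : List Bool} :
    ValidFib (a :: b :: w) ↔ (a = false ∨ b = false) ∧ ValidFib (b :: w) :=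
  isChain_cons_cons

lemma ValidFib.of_cons {a : Bool} {w : List Bool} (h : ValidFib (a :: w)) : ValidFib w :=
  IsChain.tail h

lemma validFib_cons_false {w : List Bool} : ValidFib (false :: w) ↔ ValidFib w := by
  simp [ValidFib, List.Chain', isChain_cons]

lemma ValidFib.replicate_false_append {w : List Bool} (h : ValidFib w) (k : ℕ) :
    ValidFib (replicate k false ++ w) := by
  induction k with
  | zero => exact h
  | succ k ih => simpa [replicate_succ, validFib_cons_false] using ih

lemma ValidFib.fibVal_lt : ∀ {w : List Bool}, ValidFib w → fibVal w < fib (w.length + 2)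
  | [], _ => by simp
  | [a], _ => by cases a <;> simp [fib_add_two]
  | false :: b :: w, h => by
    have := (validFib_cons_false.1 h).fibVal_lt
    have := fib_mono (show (b :: w).length + 2 ≤ (false :: b :: w).length + 2 by simp)
    simp only [fibVal_cons_false]
    omega
  | true :: b :: w, h => by
    obtain ⟨rfl, hw⟩ : b = false ∧ ValidFib (b :: w) := by simpa using validFib_cons_cons.1 h
    have := (validFib_cons_false.1 hw).fibVal_lt
    have : fib (w.length + 4) = fib (w.length + 2) + fib (w.length + 3) := fib_add_two
    show fib (w.length + 3) + fibVal (false :: w) < fib (w.length + 4)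
    rw [fibVal_cons_false]
    omega

lemma ValidFib.fib_le_fibVal_cons_iff {a : Bool} {w : List Bool} (h : ValidFib (a :: w)) :
    fib (w.length + 2) ≤ fibVal (a :: w) ↔ a = true := by
  cases a
  · simpa using h.of_cons.fibVal_lt
  · simp

lemma ValidFib.eq_of_fibVal_eq : ∀ {u v : List Bool}, ValidFib u → ValidFib v →
    u.length = v.length → fibVal u = fibVal v → u = v
  | [], [], _, _, _, _ => rfl
  | a :: u, b :: v, hu, hv, hlen, hval => by
    simp only [length_cons, Nat.add_right_cancel_iff] at hlen
    have hab : a = b := by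
      rw [Bool.eq_iff_iff, ← hu.fib_le_fibVal_cons_iff, ← hv.fib_le_fibVal_cons_iff, hval, hlen]
    subst hab
    have htail : fibVal u = fibVal v := by cases a <;> simp_all
    rw [hu.of_cons.eq_of_fibVal_eq hv.of_cons hlen htail]

def greedyFibWord : ℕ → ℕ → List Bool
  | 0, _ => []
  | n + 1, c =>
    if fib (n + 2) ≤ c then true :: greedyFibWord n (c - fib (n + 2))
    else false :: greedyFibWord n c

@[simp] lemma length_greedyFibWord : ∀ n c, (greedyFibWord n c).length = n
  | 0, _ => rfl
  | n + 1, c => by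
    rw [greedyFibWord]
    split <;> simp [length_greedyFibWord n]

lemma greedyFibWord_succ_of_lt {n c : ℕ} (h : c < fib (n + 2)) :
    greedyFibWord (n + 1) c = false :: greedyFibWord n c :=
  if_neg (by omega)

lemma greedyFibWord_succ_of_le {n c : ℕ} (h : fib (n + 2) ≤ c) :
    greedyFibWord (n + 1) c = true :: greedyFibWord n (c - fib (n + 2)) :=
  if_pos h

lemma validFib_greedyFibWord : ∀ {n c : ℕ}, c < fib (n + 2) → ValidFib (greedyFibWord n c)
  | 0, _, _ => isChain_nil
  | n + 1, c, hc => by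
    by_cases hle : fib (n + 2) ≤ c
    · have hrest : c - fib (n + 2) < fib (n + 1) := by
        have : fib (n + 1 + 2) = fib (n + 1) + fib (n + 2) := fib_add_two
        omega
      rw [greedyFibWord_succ_of_le hle]
      cases n with
      | zero => exact isChain_singleton _
      | succ n =>
        rw [greedyFibWord_succ_of_lt hrest, validFib_cons_cons, validFib_cons_false]
        exact ⟨Or.inr rfl, validFib_greedyFibWord (hrest.trans_le (fib_mono (by omega)))⟩
    · rw [greedyFibWord_succ_of_lt (by omega), validFib_cons_false]
      exact validFib_greedyFibWord (by omega)

lemma fibVal_greedyFibWord : ∀ {n c : ℕ}, c < fib (n + 2) → fibVal (greedyFibWord n c) = c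
  | 0, c, hc => by simp_all [greedyFibWord]
  | n + 1, c, hc => by
    by_cases hle : fib (n + 2) ≤ c
    · have hrest : c - fib (n + 2) < fib (n + 2) := by
        have : fib (n + 1 + 2) = fib (n + 1) + fib (n + 2) := fib_add_two
        have : fib (n + 1) ≤ fib (n + 2) := fib_le_fib_succ
        omega
      rw [greedyFibWord_succ_of_le hle, fibVal_cons_true, length_greedyFibWord,
        fibVal_greedyFibWord hrest]
      omega
    · rw [greedyFibWord_succ_of_lt (by omega), fibVal_cons_false, fibVal_greedyFibWord (by omega)]

lemma exists_lt_fib_add_two (c : ℕ) : ∃ n, c < fib (n + 2) :=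
  ⟨c + 1, fib_add_two_strictMono.id_le (c + 1)⟩

def zeckLength (c : ℕ) : ℕ := Nat.find (exists_lt_fib_add_two c)

def zeckWord (c : ℕ) : List Bool := greedyFibWord (zeckLength c) c

lemma lt_fib_zeckLength (c : ℕ) : c < fib (zeckLength c + 2) :=
  Nat.find_spec (exists_lt_fib_add_two c)

lemma fib_le_of_zeckLength_eq_succ {c n : ℕ} (h : zeckLength c = n + 1) : fib (n + 2) ≤ c :=
  not_lt.1 (Nat.find_min (exists_lt_fib_add_two c) (by rw [zeckLength] at h; omega))

lemma head?_zeckWord_ne (c : ℕ) : (zeckWord c).head? ≠ some false := by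
  rw [zeckWord]
  cases h : zeckLength c with
  | zero => simp [greedyFibWord]
  | succ n => simp [greedyFibWord_succ_of_le (fib_le_of_zeckLength_eq_succ h)]

lemma validFib_and_fibVal_eq_iff {w : List Bool} {c : ℕ} :
    ValidFib w ∧ fibVal w = c ↔ ∃ k, w = replicate k false ++ zeckWord c := by
  have hz : ValidFib (zeckWord c) := validFib_greedyFibWord (lt_fib_zeckLength c)
  have hzc : fibVal (zeckWord c) = c := fibVal_greedyFibWord (lt_fib_zeckLength c)
  constructor
  · rintro ⟨hw, rfl⟩
    have hlen : zeckLength (fibVal w) ≤ w.length := Nat.find_min' _ hw.fibVal_lt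
    refine ⟨w.length - zeckLength (fibVal w), hw.eq_of_fibVal_eq (hz.replicate_false_append _)
      ?_ (by rw [fibVal_replicate_false_append, hzc])⟩
    simp [zeckWord]
    omega
  · rintro ⟨k, rfl⟩
    exact ⟨hz.replicate_false_append k, by rw [fibVal_replicate_false_append, hzc]⟩

lemma two_pow_le_fib_two_mul_add_one : ∀ m, 2 ^ m ≤ fib (2 * m + 1)
  | 0 => by simp
  | m + 1 => by
    have := two_pow_le_fib_two_mul_add_one m
    have : fib (2 * m + 3) = fib (2 * m + 1) + fib (2 * m + 2) := fib_add_two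
    have : fib (2 * m + 1) ≤ fib (2 * m + 2) := fib_le_fib_succ
    rw [pow_succ, show 2 * (m + 1) + 1 = 2 * m + 3 by ring]
    omega

lemma zeckLength_le_log (c : ℕ) : zeckLength c ≤ 2 * Nat.log 2 (c + 1) + 1 := by
  cases h : zeckLength c with
  | zero => omega
  | succ n =>
    have : 2 ^ ((n + 1) / 2) ≤ c + 1 := calc
      2 ^ ((n + 1) / 2) ≤ fib (2 * ((n + 1) / 2) + 1) := two_pow_le_fib_two_mul_add_one _
      _ ≤ fib (n + 2) := fib_mono (by omega)
      _ ≤ c + 1 := (fib_le_of_zeckLength_eq_succ h).trans (Nat.le_succ c)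
    have := Nat.le_log_of_pow_le one_lt_two this
    omega

lemma List.cons_eq_drop_iff {α : Type*} {b : α} {w z : List α} {i : ℕ} :
    b :: w = z.drop i ↔ z[i]? = some b ∧ w = z.drop (i + 1) := by
  rcases lt_or_ge i z.length with hi | hi
  · rw [drop_eq_getElem_cons hi, getElem?_eq_getElem hi, cons_eq_cons, Option.some_inj, eq_comm]
  · simp [drop_eq_nil_of_le hi, getElem?_eq_none hi]

lemma List.exists_cons_eq_replicate_append_iff {α : Type*} {a b : α} {w z : List α} :
    (∃ k, b :: w = replicate k a ++ z) ↔ b :: w = z ∨ b = a ∧ ∃ k, w = replicate k a ++ z := by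
  constructor
  · rintro ⟨_ | k, h⟩
    · exact .inl h
    · simp only [replicate_succ, cons_append, cons_eq_cons] at h
      exact .inr ⟨h.1, k, h.2⟩
  · rintro (h | ⟨rfl, k, rfl⟩)
    · exact ⟨0, h⟩
    · exact ⟨k + 1, rfl⟩

namespace DFA

variable {α : Type*} [DecidableEq α]

/-- The DFA for `a* z`: state `some i` means the first `i` letters of `z` have been read, and
`some 0` also loops on `a`. -/
def padMatch (a : α) (z : List α) : DFA α (Option (Fin (z.length + 1))) where
  step
    | none, _ => none
    | some i, b =>
      if h : z[i.val]? = some b then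
        some ⟨i + 1, by have := (List.getElem?_eq_some_iff.1 h).1; omega⟩
      else if i = 0 ∧ b = a then some i
      else none
  start := some 0
  accept := {some (Fin.last _)}

variable (a : α) (z : List α)

lemma padMatch_evalFrom_none (w : List α) : (padMatch a z).evalFrom none w = none := by
  induction w with
  | nil => rfl
  | cons b w ih => exact ih

lemma padMatch_evalFrom_some_eq_last_iff (w : List α) {i : Fin (z.length + 1)} (hi : i ≠ 0) :
    (padMatch a z).evalFrom (some i) w = some (Fin.last _) ↔ w = z.drop i := by
  induction w generalizing i with
  | nil =>
    simp [Fin.ext_iff, eq_comm (a := ([] : List α)), drop_eq_nil_iff]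
    omega
  | cons b w ih =>
    rw [evalFrom_cons, List.cons_eq_drop_iff]
    by_cases h : z[i.val]? = some b
    · simp only [padMatch, h, true_and]
      exact ih (Fin.ne_of_val_ne (by simp))
    · have hstep : (padMatch a z).step (some i) b = none := by simp [padMatch, h, hi]
      simp [hstep, h, padMatch_evalFrom_none]

lemma padMatch_evalFrom_zero_eq_last_iff (hz : z.head? ≠ some a) (w : List α) :
    (padMatch a z).evalFrom (some 0) w = some (Fin.last _) ↔
      ∃ k, w = replicate k a ++ z := by
  rw [head?_eq_getElem?] at hz
  induction w with
  | nil =>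
    simp [Fin.ext_iff, eq_comm (a := 0)]
  | cons b w ih =>
    rw [evalFrom_cons, List.exists_cons_eq_replicate_append_iff, ← ih,
      ← drop_zero (l := z), List.cons_eq_drop_iff, drop_zero]
    by_cases h : z[0]? = some b
    · have hba : b ≠ a := by rintro rfl; exact hz h
      have hpos : 0 < z.length := (List.getElem?_eq_some_iff.1 h).1
      have hstep : (padMatch a z).step (some 0) b = some ⟨1, by omega⟩ := by simp [padMatch, h]
      rw [hstep, padMatch_evalFrom_some_eq_last_iff _ _ _ (Fin.ne_of_val_ne one_ne_zero)]
      simp [h, hba]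
    · by_cases hb : b = a
      · subst hb
        have hstep : (padMatch b z).step (some 0) b = some 0 := by simp [padMatch, h]
        simp [hstep, h]
      · have hstep : (padMatch a z).step (some 0) b = none := by simp [padMatch, h, hb]
        simp [hstep, h, hb, padMatch_evalFrom_none]

theorem mem_padMatch_accepts (hz : z.head? ≠ some a) (w : List α) :
    w ∈ (padMatch a z).accepts ↔ ∃ k, w = replicate k a ++ z :=
  padMatch_evalFrom_zero_eq_last_iff a z hz w

end DFA

theorem eq_const_state_complexity :
    ∃ C : ℕ, ∀ c : ℕ, ∃ (σ : Type) (_ : Fintype σ) (M : DFA Bool σ),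
      Fintype.card σ ≤ C * (Nat.log 2 (c + 1) + 1) ∧
      ∀ w : List Bool, w ∈ M.accepts ↔ ValidFib w ∧ fibVal w = c := by
  refine ⟨3, fun c => ⟨_, inferInstance, DFA.padMatch false (zeckWord c), ?_, fun w => ?_⟩⟩
  · have := zeckLength_le_log c
    simp only [Fintype.card_option, Fintype.card_fin, zeckWord, length_greedyFibWord]
    omega
  · rw [DFA.mem_padMatch_accepts _ _ (head?_zeckWord_ne c), validFib_and_fibVal_eq_iff]
end
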